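/- arXiv:1902.02921 — 2 statements merged into one kernel-verified Lean document; each statement's English description precedes it below -/
import Mathlib

section
/- Let D be a binary dataset with |D| ≥ 2 and let X and Y be item segments of length N having N−1 mutual items. If N ≥ log₂|D| − log₂ log₂|D| + 2, then score(X ∪ Y) ≥ score(X) + score(Y) − score(X ∩ Y). -/
open Finset

/-- The marginal probability `p(X = v)`: the probability that the coordinates in `X`
agree with `v`. -/
noncomputable def marg {K : ℕ} (p : (Fin K → Bool) → ℝ) (X : Finset (Fin K))
    (v : Fin K → Bool) : ℝ :=
  ∑ t ∈ Finset.univ.filter (fun t : Fin K → Bool => ∀ i ∈ X, t i = v i), p t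

/-- `p` is a probability distribution on `{0,1}^K`. -/
def IsDist {K : ℕ} (p : (Fin K → Bool) → ℝ) : Prop :=
  (∀ t, 0 ≤ p t) ∧ ∑ t : Fin K → Bool, p t = 1

/-- The empirical distribution of a dataset `D`. -/
noncomputable def empDist {K : ℕ} (D : Multiset (Fin K → Bool)) : (Fin K → Bool) → ℝ :=
  fun v => (D.count v : ℝ) / (Multiset.card D : ℝ)

/-- The entropy (base 2) of the marginal of `p` on the attribute set `X`,
summing over representative vectors which are `false` outside of `X`. -/
noncomputable def segEntropy {K : ℕ} (p : (Fin K → Bool) → ℝ) (X : Finset (Fin K)) : ℝ :=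
  -∑ v ∈ Finset.univ.filter (fun v : Fin K → Bool => ∀ i, i ∉ X → v i = false),
      marg p X v * Real.logb 2 (marg p X v)

/-- The item segment of the attributes at positions `a,…,b` in the order `o`. -/
def segIv {K : ℕ} (o : Equiv.Perm (Fin K)) (a b : ℕ) : Finset (Fin K) :=
  (Finset.univ.filter (fun k : Fin K => a ≤ (k : ℕ) ∧ (k : ℕ) ≤ b)).image o

/-- A collection `𝒞 = {C_1, …, C_L} ∈ Seg(o)` of item segments covering all attributes,
forming an antichain, listed in the order of their first attribute.  The `i`-th segment
(for `0 ≤ i < L`) consists of the positions `s i, …, e i` in the order `o`. -/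
structure SegColl (K : ℕ) where
  /-- number of segments -/
  L : ℕ
  hL : 0 < L
  /-- start position of each segment -/
  s : ℕ → ℕ
  /-- end position of each segment -/
  e : ℕ → ℕ
  s_mono : ∀ i, i + 1 < L → s i < s (i + 1)
  e_mono : ∀ i, i + 1 < L → e i < e (i + 1)
  s_le_e : ∀ i, i < L → s i ≤ e i
  s_first : s 0 = 0
  e_last : e (L - 1) = K - 1
  e_lt : ∀ i, i < L → e i < K
  covers : ∀ i, i + 1 < L → s (i + 1) ≤ e i + 1

/-- The `i`-th item segment `C_{i+1}` of the collection, under the order `o`. -/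
def SegColl.seg {K : ℕ} (𝒞 : SegColl K) (o : Equiv.Perm (Fin K)) (i : ℕ) : Finset (Fin K) :=
  segIv o (𝒞.s i) (𝒞.e i)

/-- The intersection `S_i = C_i ∩ C_{i+1}` of consecutive segments. -/
def SegColl.ovl {K : ℕ} (𝒞 : SegColl K) (o : Equiv.Perm (Fin K)) (i : ℕ) : Finset (Fin K) :=
  𝒞.seg o i ∩ 𝒞.seg o (i + 1)

/-- Membership of a distribution `p` in the model `M(𝒞)`:
`p(A = t) ∏_{i=1}^{L-1} p(S_i = t) = ∏_{i=1}^{L} p(C_i = t)` for all `t`. -/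
def memModel {K : ℕ} (o : Equiv.Perm (Fin K)) (𝒞 : SegColl K)
    (p : (Fin K → Bool) → ℝ) : Prop :=
  IsDist p ∧ ∀ t : Fin K → Bool,
    p t * ∏ i ∈ Finset.range (𝒞.L - 1), marg p (𝒞.ovl o i) t
      = ∏ i ∈ Finset.range 𝒞.L, marg p (𝒞.seg o i) t

/-- The number of free parameters `df(𝒞)`. -/
def SegColl.df {K : ℕ} (𝒞 : SegColl K) (o : Equiv.Perm (Fin K)) : ℤ :=
  (∑ i ∈ Finset.range 𝒞.L, ((2 : ℤ) ^ (𝒞.seg o i).card - 1))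
    - ∑ i ∈ Finset.range (𝒞.L - 1), ((2 : ℤ) ^ (𝒞.ovl o i).card - 1)

/-- The score of a single item segment `C`:
`score(C) = |D| H(C; D) + (log₂|D|/2)(2^{|C|} - 1)`. -/
noncomputable def segScore {K : ℕ} (D : Multiset (Fin K → Bool)) (C : Finset (Fin K)) : ℝ :=
  (Multiset.card D : ℝ) * segEntropy (empDist D) C
    + Real.logb 2 (Multiset.card D) / 2 * ((2 : ℝ) ^ C.card - 1)

/-- The score of a collection: `score(𝒞) = ∑ score(C_i) - ∑ score(S_i)`. -/
noncomputable def collScore {K : ℕ} (D : Multiset (Fin K → Bool)) (o : Equiv.Perm (Fin K))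
    (𝒞 : SegColl K) : ℝ :=
  ∑ i ∈ Finset.range 𝒞.L, segScore D (𝒞.seg o i)
    - ∑ i ∈ Finset.range (𝒞.L - 1), segScore D (𝒞.ovl o i)

/-- `X` is an item segment for the order `o`: a set of consecutive attributes. -/
def IsSegment {K : ℕ} (o : Equiv.Perm (Fin K)) (X : Finset (Fin K)) : Prop :=
  ∃ a b : ℕ, b < K ∧ a ≤ b ∧ X = segIv o a b

/-! Write `U = X ∪ Y` and `I = X ∩ Y`, so that `U` is `Y` plus one attribute and `X` is `I` plus
one attribute. Adding attributes never lowers the entropy, and adding one binary attribute raises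
it by at most one bit (convexity of `x log x`), hence `H(X) + H(Y) ≤ H(U) + H(I) + 1`: the entropy
terms cost at most `|D|`. The complexity terms contribute
`(log₂|D| / 2)(2^{N+1} - 2·2^N + 2^{N-1}) = log₂|D| · 2^{N-2}`, and the bound on `N` is exactly
`2^{N-2} ≥ |D| / log₂|D|`. -/

open Real

lemma mul_logb_add_mul_logb_le {b x y : ℝ} (hb : 1 < b) (hx : 0 ≤ x) (hy : 0 ≤ y) :
    x * logb b x + y * logb b y ≤ (x + y) * logb b (x + y) := by
  have key : ∀ {u : ℝ}, 0 ≤ u → u ≤ x + y → u * logb b u ≤ u * logb b (x + y) := by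
    intro u hu hle
    rcases hu.eq_or_lt with rfl | hu
    · simp
    · exact mul_le_mul_of_nonneg_left (logb_le_logb_of_le hb hu hle) hu.le
  linarith [key hx (le_add_of_nonneg_right hy), key hy (le_add_of_nonneg_left hx)]

lemma mul_log_add_le {x y : ℝ} (hx : 0 ≤ x) (hy : 0 ≤ y) :
    (x + y) * log (x + y) ≤ x * log x + y * log y + (x + y) * log 2 := by
  rcases (add_nonneg hx hy).eq_or_lt with hxy | hxy
  · obtain ⟨rfl, rfl⟩ : x = 0 ∧ y = 0 := (add_eq_zero_iff_of_nonneg hx hy).1 hxy.symm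
    simp
  have h := convexOn_mul_log.2 (Set.mem_Ici.2 hx) (Set.mem_Ici.2 hy)
    (by norm_num : (0 : ℝ) ≤ 1 / 2) (by norm_num : (0 : ℝ) ≤ 1 / 2) (by norm_num)
  have hmid : 1 / 2 * x + 1 / 2 * y = (x + y) / 2 := by ring
  simp only [smul_eq_mul, hmid, log_div hxy.ne' two_ne_zero] at h
  linarith

lemma mul_logb_two_add_le {x y : ℝ} (hx : 0 ≤ x) (hy : 0 ≤ y) :
    (x + y) * logb 2 (x + y) ≤ x * logb 2 x + y * logb 2 y + (x + y) := by
  have h := div_le_div_of_nonneg_right (mul_log_add_le hx hy) (log_pos one_lt_two).le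
  rw [add_div, mul_div_cancel_right₀ _ (log_pos one_lt_two).ne'] at h
  simpa only [logb, mul_div_assoc, add_div] using h

section Entropy

variable {K : ℕ}

def supportedVecs (A : Finset (Fin K)) : Finset (Fin K → Bool) :=
  univ.filter fun v => ∀ i, i ∉ A → v i = false

lemma segEntropy_eq_sum (p : (Fin K → Bool) → ℝ) (A : Finset (Fin K)) :
    segEntropy p A = -∑ v ∈ supportedVecs A, marg p A v * logb 2 (marg p A v) := rfl

lemma marg_nonneg {p : (Fin K → Bool) → ℝ} (hp : ∀ t, 0 ≤ p t) (A : Finset (Fin K))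
    (v : Fin K → Bool) : 0 ≤ marg p A v :=
  sum_nonneg fun t _ => hp t

lemma sum_marg (p : (Fin K → Bool) → ℝ) (A : Finset (Fin K)) :
    ∑ v ∈ supportedVecs A, marg p A v = ∑ t, p t := by
  set r : (Fin K → Bool) → Fin K → Bool := fun t i => if i ∈ A then t i else false
  have hr : ∀ t ∈ (univ : Finset (Fin K → Bool)), r t ∈ supportedVecs A := by
    intro t _
    simp +contextual [supportedVecs, r]
  rw [← sum_fiberwise_of_maps_to hr]
  refine sum_congr rfl fun v hv => sum_congr (Finset.ext fun t => ?_) fun _ _ => rfl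
  simp only [supportedVecs, mem_filter, mem_univ, true_and] at hv ⊢
  refine ⟨fun h => funext fun i => ?_, fun h i hi => by simp [← h, r, hi]⟩
  by_cases hi : i ∈ A
  · simp [r, hi, h i hi]
  · simp [r, hi, hv i hi]

lemma sum_supportedVecs_insert {x : Fin K} {A : Finset (Fin K)} (hx : x ∉ A)
    (f : (Fin K → Bool) → ℝ) :
    ∑ v ∈ supportedVecs (insert x A), f v
      = ∑ v ∈ supportedVecs A, (f v + f (Function.update v x true)) := by
  have hA : supportedVecs A = (supportedVecs (insert x A)).filter (fun v => v x = false) := by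
    ext v
    simp only [supportedVecs, mem_filter, mem_univ, true_and, mem_insert, not_or]
    refine ⟨fun h => ⟨fun i hi => h i hi.2, h x hx⟩, fun ⟨h, hvx⟩ i hi => ?_⟩
    by_cases hix : i = x
    · exact hix ▸ hvx
    · exact h i ⟨hix, hi⟩
  have hupd : ((supportedVecs (insert x A)).filter (fun v => ¬ v x = false))
      = (supportedVecs A).image (fun v => Function.update v x true) := by
    ext w
    simp only [supportedVecs, mem_filter, mem_univ, true_and, mem_image, mem_insert,
      Bool.not_eq_false]
    constructor
    · rintro ⟨h, hwx⟩
      refine ⟨Function.update w x false, fun i hi => ?_, by simp [← hwx]⟩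
      by_cases hix : i = x
      · simp [hix]
      · simpa [hix] using h i (by tauto)
    · rintro ⟨v, hv, rfl⟩
      refine ⟨fun i hi => ?_, by simp⟩
      simpa [Function.update_of_ne (show i ≠ x by tauto)] using hv i (by tauto)
  rw [← sum_filter_add_sum_filter_not _ (fun v => v x = false), ← hA, hupd, sum_image,
    sum_add_distrib]
  intro v hv w hw h
  funext i
  by_cases hix : i = x
  · simp only [hA, mem_coe, mem_filter] at hv hw
    rw [hix, hv.2, hw.2]
  · simpa [Function.update_of_ne hix] using congrFun h i

lemma marg_eq_add_marg_insert (p : (Fin K → Bool) → ℝ) {x : Fin K} {A : Finset (Fin K)}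
    (hx : x ∉ A) {v : Fin K → Bool} (hvx : v x = false) :
    marg p A v = marg p (insert x A) v
      + marg p (insert x A) (Function.update v x true) := by
  have hfilter : ∀ b : Bool, (univ.filter fun t : Fin K → Bool => ∀ i ∈ A, t i = v i).filter
      (fun t => t x = b)
        = univ.filter fun t => ∀ i ∈ insert x A, t i = Function.update v x b i := by
    intro b
    ext t
    simp only [mem_filter, mem_univ, true_and, forall_mem_insert, Function.update_self]
    refine ⟨fun ⟨h, htx⟩ => ⟨htx, fun i hi => ?_⟩, fun ⟨htx, h⟩ => ⟨fun i hi => ?_, htx⟩⟩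
    · rw [Function.update_of_ne (ne_of_mem_of_not_mem hi hx)]; exact h i hi
    · rw [h i hi, Function.update_of_ne (ne_of_mem_of_not_mem hi hx)]
  unfold marg
  rw [← sum_filter_add_sum_filter_not _ (fun t => t x = false)]
  simp only [Bool.not_eq_false, hfilter]
  rw [Function.update_eq_self_iff.2 hvx.symm]

variable {p : (Fin K → Bool) → ℝ}

lemma segEntropy_le_insert (hp : ∀ t, 0 ≤ p t) (x : Fin K) (A : Finset (Fin K)) :
    segEntropy p A ≤ segEntropy p (insert x A) := by
  by_cases hx : x ∈ A
  · rw [insert_eq_of_mem hx]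
  rw [segEntropy_eq_sum, segEntropy_eq_sum, sum_supportedVecs_insert hx, neg_le_neg_iff]
  refine sum_le_sum fun v hv => ?_
  rw [marg_eq_add_marg_insert p hx ((mem_filter.1 hv).2 x hx)]
  exact mul_logb_add_mul_logb_le one_lt_two (marg_nonneg hp _ _) (marg_nonneg hp _ _)

lemma segEntropy_insert_le (hp : ∀ t, 0 ≤ p t) (x : Fin K) (A : Finset (Fin K)) :
    segEntropy p (insert x A) ≤ segEntropy p A + ∑ t, p t := by
  by_cases hx : x ∈ A
  · rw [insert_eq_of_mem hx]
    linarith [sum_nonneg fun t (_ : t ∈ univ) => hp t]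
  set q := marg p (insert x A)
  have key : ∀ v ∈ supportedVecs A, marg p A v * logb 2 (marg p A v)
      ≤ (q v * logb 2 (q v) + q (Function.update v x true) * logb 2 (q (Function.update v x true)))
        + marg p A v := by
    intro v hv
    rw [marg_eq_add_marg_insert p hx ((mem_filter.1 hv).2 x hx)]
    exact mul_logb_two_add_le (marg_nonneg hp _ _) (marg_nonneg hp _ _)
  have h := sum_le_sum key
  rw [sum_add_distrib, sum_marg] at h
  rw [segEntropy_eq_sum, segEntropy_eq_sum, sum_supportedVecs_insert hx]
  linarith

lemma segEntropy_le_union (hp : ∀ t, 0 ≤ p t) (s A : Finset (Fin K)) :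
    segEntropy p A ≤ segEntropy p (s ∪ A) := by
  induction s using Finset.induction_on with
  | empty => simp
  | insert x s _ ih => rw [insert_union]; exact ih.trans (segEntropy_le_insert hp _ _)

lemma segEntropy_union_le (hp : ∀ t, 0 ≤ p t) (s A : Finset (Fin K)) :
    segEntropy p (s ∪ A) ≤ segEntropy p A + s.card * ∑ t, p t := by
  induction s using Finset.induction_on with
  | empty => simp
  | insert x s hx ih =>
    rw [insert_union, card_insert_of_notMem hx]
    push_cast
    linarith [segEntropy_insert_le hp x (s ∪ A)]

lemma IsDist.segEntropy_add_segEntropy_le (hp : IsDist p) (X Y : Finset (Fin K)) :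
    segEntropy p X + segEntropy p Y
      ≤ segEntropy p (X ∪ Y) + segEntropy p (X ∩ Y) + (X \ Y).card := by
  have hY := segEntropy_le_union hp.1 X Y
  have hX := segEntropy_union_le hp.1 (X \ Y) (X ∩ Y)
  rw [sdiff_union_inter, hp.2, mul_one] at hX
  linarith

end Entropy

lemma isDist_empDist {K : ℕ} {D : Multiset (Fin K → Bool)} (hD : Multiset.card D ≠ 0) :
    IsDist (empDist D) := by
  refine ⟨fun t => by unfold empDist; positivity, ?_⟩
  simp only [empDist, ← sum_div]
  rw [div_eq_one_iff_eq (Nat.cast_ne_zero.2 hD)]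
  exact_mod_cast Multiset.sum_count_eq_card fun t _ => mem_univ t

lemma le_logb_mul_rpow {b m n : ℝ} (hb : 1 < b) (hm : 1 < m)
    (hn : logb b m - logb b (logb b m) ≤ n) : m ≤ logb b m * b ^ n := by
  have hL : 0 < logb b m := logb_pos hb hm
  calc m = logb b m * b ^ (logb b m - logb b (logb b m)) := by
        rw [rpow_sub (by linarith), rpow_logb (by linarith) hb.ne' (by linarith),
          rpow_logb (by linarith) hb.ne' hL]
        field_simp
    _ ≤ logb b m * b ^ n := by gcongr; exact hb.le

theorem long_segments_prunable_general {K : ℕ} (D : Multiset (Fin K → Bool))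
    (hD : 2 ≤ Multiset.card D) (N : ℕ) (X Y : Finset (Fin K))
    (hXcard : X.card = N) (hYcard : Y.card = N) (hXY : (X ∩ Y).card = N - 1)
    (hN : (N : ℝ) ≥ Real.logb 2 (Multiset.card D)
        - Real.logb 2 (Real.logb 2 (Multiset.card D)) + 2) :
    segScore D (X ∪ Y) ≥ segScore D X + segScore D Y - segScore D (X ∩ Y) := by
  rcases N.eq_zero_or_pos with rfl | hN1
  · obtain rfl : X = ∅ := card_eq_zero.1 hXcard
    obtain rfl : Y = ∅ := card_eq_zero.1 hYcard
    simp
  set m : ℝ := (Multiset.card D : ℝ)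
  have hm : 1 < m := by simp only [m]; exact_mod_cast hD
  have hUcard : (X ∪ Y).card = N + 1 := by have := card_union_add_card_inter X Y; omega
  have hsdiff : (X \ Y).card = 1 := by rw [card_sdiff, inter_comm]; omega
  have hH := (isDist_empDist (by omega : Multiset.card D ≠ 0)).segEntropy_add_segEntropy_le X Y
  rw [hsdiff, Nat.cast_one] at hH
  have hmH := mul_le_mul_of_nonneg_left hH (by linarith : 0 ≤ m)
  have hpen : m ≤ logb 2 m * 2 ^ ((N : ℝ) - 2) := le_logb_mul_rpow one_lt_two hm (by linarith)
  have hQ : (2 : ℝ) ^ (N - 1) = 2 * 2 ^ ((N : ℝ) - 2) := by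
    rw [← rpow_natCast, Nat.cast_sub hN1, Nat.cast_one,
      show (N : ℝ) - 1 = (N - 2) + 1 by ring, rpow_add_one two_ne_zero, mul_comm]
  have hP : (2 : ℝ) ^ N = 2 * 2 ^ (N - 1) := by rw [← pow_succ', Nat.sub_add_cancel hN1]
  unfold segScore
  rw [hUcard, hXcard, hYcard, hXY, pow_succ, hP, hQ]
  linarith

/-- If `X`, `Y` are segments of length `N` sharing `N - 1` items and
`N ≥ log₂|D| - log₂ log₂|D| + 2`, then
`score(X ∪ Y) ≥ score(X) + score(Y) - score(X ∩ Y)`. -/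
theorem long_segments_prunable {K : ℕ} (D : Multiset (Fin K → Bool))
    (hD : 2 ≤ Multiset.card D) (o : Equiv.Perm (Fin K)) (N : ℕ) (X Y : Finset (Fin K))
    (hX : IsSegment o X) (hY : IsSegment o Y)
    (hXcard : X.card = N) (hYcard : Y.card = N) (hXY : (X ∩ Y).card = N - 1) (hne : X ≠ Y)
    (hN : (N : ℝ) ≥ Real.logb 2 (Multiset.card D)
        - Real.logb 2 (Real.logb 2 (Multiset.card D)) + 2) :
    segScore D (X ∪ Y) ≥ segScore D X + segScore D Y - segScore D (X ∩ Y) :=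
  long_segments_prunable_general D hD N X Y hXcard hYcard hXY hN
end

section
/- Let o be a linear order on the K attributes, 𝒞 ∈ Seg(o), and let 𝒳 = {X : X ⊆ C for some C ∈ 𝒞} be the downward closure of 𝒞 (including the empty set). A strictly positive probability distribution p on {0,1}^K belongs to M(𝒞) if and only if there exist real constants (r_X)_{X ∈ 𝒳} such that p(A = t) = exp(∑_{X ∈ 𝒳} r_X S_X(t)) for every t ∈ {0,1}^K. -/
open Finset

/-- The indicator function `S_X` of an itemset `X`: `S_X(t) = ∏_{i ∈ X} t_i`. -/
def indFn {K : ℕ} (X : Finset (Fin K)) : (Fin K → Bool) → ℝ :=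
  fun t => ∏ i ∈ X, (if t i then (1 : ℝ) else 0)

/-!
The indicators `S_X` with `X ⊆ C` span exactly the functions on `{0,1}^K` that depend only on the
coordinates in `C` (split off one coordinate at a time). If `p ∈ M(𝒞)`, then
`log p = ∑ log p(C_i) - ∑ log p(S_i)` is a sum of such functions, one for each segment.
Conversely, an exponential form writes `p = f_0 ⋯ f_{L-1}` with `f_i` depending only on `C_i`;
because the segments are intervals of the order `o`, summing out the coordinates outside `C_i`
or `S_i` factorizes, and the resulting marginals telescope to the defining identity of `M(𝒞)`.
-/

section IndicatorSpan

variable {K : ℕ}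

lemma indFn_empty : indFn (∅ : Finset (Fin K)) = 1 := by
  funext t
  simp [indFn]

lemma indFn_insert {a : Fin K} {X : Finset (Fin K)} (ha : a ∉ X) :
    indFn (insert a X) = indFn {a} * indFn X := by
  funext t
  simp [indFn, prod_insert ha]

lemma dependsOn_indFn (X : Finset (Fin K)) : DependsOn (indFn X) X :=
  fun _ _ h => Finset.prod_congr rfl fun i hi => by rw [h i hi]

noncomputable def indSpan (𝒟 : Set (Finset (Fin K))) : Submodule ℝ ((Fin K → Bool) → ℝ) :=
  Submodule.span ℝ (indFn '' 𝒟)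

lemma mem_indSpan_iff {𝒟 : Set (Finset (Fin K))} {F : (Fin K → Bool) → ℝ} :
    F ∈ indSpan 𝒟 ↔
      ∃ r : Finset (Fin K) → ℝ, (∀ X ∉ 𝒟, r X = 0) ∧ ∀ t, F t = ∑ X, r X * indFn X t := by
  constructor
  · intro hF
    obtain ⟨l, hl, rfl⟩ := Finsupp.mem_span_image_iff_linearCombination ℝ |>.1 hF
    refine ⟨l, fun X hX => (Finsupp.mem_supported' ℝ l).1 hl X hX, fun t => ?_⟩
    simp [Finsupp.linearCombination_apply, Finsupp.sum_fintype, Finset.sum_apply]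
  · rintro ⟨r, hr, hF⟩
    have : F = ∑ X, r X • indFn X := funext fun t => by simp [hF, Finset.sum_apply]
    rw [this]
    refine Submodule.sum_mem _ fun X _ => ?_
    by_cases hX : X ∈ 𝒟
    · exact Submodule.smul_mem _ _ (Submodule.subset_span ⟨X, hX, rfl⟩)
    · simp [hr X hX]

lemma DependsOn.of_mem_indSpan {C : Finset (Fin K)} {F : (Fin K → Bool) → ℝ}
    (hF : F ∈ indSpan {X | X ⊆ C}) : DependsOn F C := by
  induction hF using Submodule.span_induction with
  | mem G hG =>
    obtain ⟨X, hXC, rfl⟩ := hG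
    exact (dependsOn_indFn X).mono (Finset.coe_subset.2 hXC)
  | zero => exact fun _ _ _ => rfl
  | add G H _ _ hG hH => exact fun x y h => by simp only [Pi.add_apply, hG h, hH h]
  | smul c G _ hG => exact fun x y h => by simp only [Pi.smul_apply, hG h]

lemma indSpan_mono {𝒟 ℰ : Set (Finset (Fin K))} (h : 𝒟 ⊆ ℰ) : indSpan 𝒟 ≤ indSpan ℰ :=
  Submodule.span_mono (Set.image_mono h)

/-- Splitting off one coordinate `a`: `F = F|_{a=0} + S_{a} (F|_{a=1} - F|_{a=0})`. -/
lemma mem_indSpan_of_dependsOn {C : Finset (Fin K)} {F : (Fin K → Bool) → ℝ}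
    (hF : DependsOn F C) : F ∈ indSpan {X | X ⊆ C} := by
  classical
  induction C using Finset.induction_on generalizing F with
  | empty =>
    have : F = F (fun _ => false) • indFn ∅ := by
      funext t
      simpa [indFn_empty] using hF fun i hi => absurd hi (Finset.notMem_empty i)
    rw [this]
    exact Submodule.smul_mem _ _ (Submodule.subset_span ⟨∅, Finset.empty_subset _, rfl⟩)
  | insert a C ha ih =>
    set F₀ := fun t => F (Function.update t a false)
    set F₁ := fun t => F (Function.update t a true)
    have hupd : ∀ b, DependsOn (fun t => F (Function.update t a b)) C := fun b => by
      simpa [Finset.erase_insert ha] using hF.update a b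
    have hsplit : F = F₀ + indFn {a} * (F₁ - F₀) := by
      funext t
      cases hta : t a <;> simp [F₀, F₁, indFn, ← hta]
    have hmul : indSpan {X | X ⊆ C} ≤
        (indSpan {X | X ⊆ insert a C}).comap (LinearMap.mulLeft ℝ (indFn {a})) := by
      refine Submodule.span_le.2 ?_
      rintro _ ⟨X, hXC, rfl⟩
      have haX : a ∉ X := fun h => ha (hXC h)
      refine Submodule.subset_span ⟨insert a X, Finset.insert_subset_insert a hXC, ?_⟩
      simp [indFn_insert haX]
    have hle := indSpan_mono (K := K) (fun X (hX : X ⊆ C) => hX.trans (Finset.subset_insert a C))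
    rw [hsplit]
    exact add_mem (hle (ih (hupd false))) (hmul (sub_mem (ih (hupd true)) (ih (hupd false))))

lemma mem_indSpan_iff_dependsOn {C : Finset (Fin K)} {F : (Fin K → Bool) → ℝ} :
    F ∈ indSpan {X | X ⊆ C} ↔ DependsOn F C :=
  ⟨DependsOn.of_mem_indSpan, mem_indSpan_of_dependsOn⟩

lemma exists_sum_dependsOn_of_mem_indSpan {L : ℕ} {C : ℕ → Finset (Fin K)}
    {F : (Fin K → Bool) → ℝ} (hF : F ∈ indSpan {X | ∃ i < L, X ⊆ C i}) :
    ∃ g : ℕ → (Fin K → Bool) → ℝ, (∀ i < L, DependsOn (g i) (C i)) ∧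
      F = ∑ i ∈ Finset.range L, g i := by
  have hset : {X | ∃ i < L, X ⊆ C i} = ⋃ i ∈ Finset.range L, {X | X ⊆ C i} := by
    ext X
    simp
  rw [indSpan, hset, Set.image_iUnion₂, Submodule.span_iUnion₂,
    Submodule.mem_iSup_finset_iff_exists_sum] at hF
  obtain ⟨μ, hμ⟩ := hF
  exact ⟨fun i => μ i, fun i _ => mem_indSpan_iff_dependsOn.1 (μ i).2, hμ.symm⟩

end IndicatorSpan

section Marginal

variable {K : ℕ}

lemma marg_univ (p : (Fin K → Bool) → ℝ) (t : Fin K → Bool) : marg p univ t = p t := by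
  have : univ.filter (fun u : Fin K → Bool => ∀ i ∈ univ, u i = t i) = {t} := by
    ext u
    simp [funext_iff]
  rw [marg, this, sum_singleton]

lemma marg_pos {p : (Fin K → Bool) → ℝ} (hp : ∀ t, 0 < p t) (X : Finset (Fin K))
    (t : Fin K → Bool) : 0 < marg p X t :=
  sum_pos (fun u _ => hp u) ⟨t, mem_filter.2 ⟨mem_univ t, fun _ _ => rfl⟩⟩

lemma dependsOn_marg (p : (Fin K → Bool) → ℝ) (X : Finset (Fin K)) :
    DependsOn (marg p X) X := fun u v h => by
  unfold marg
  congr 1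
  exact filter_congr fun w _ => forall₂_congr fun i hi => by rw [h i hi]

lemma marg_mul_of_dependsOn {F : (Fin K → Bool) → ℝ} {W : Finset (Fin K)}
    (hF : DependsOn F W) (G : (Fin K → Bool) → ℝ) (t : Fin K → Bool) :
    marg (fun u => F u * G u) W t = F t * marg G W t := by
  rw [marg, marg, mul_sum]
  refine sum_congr rfl fun u hu => ?_
  rw [hF fun i hi => (mem_filter.1 hu).2 i hi]

lemma marg_mul_inter {U V : Finset (Fin K)} (hUV : U ∪ V = univ) {g h : (Fin K → Bool) → ℝ}
    (hg : DependsOn g V) (hh : DependsOn h U) (t : Fin K → Bool) :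
    marg (fun u => g u * h u) (U ∩ V) t = marg g U t * marg h V t := by
  classical
  have hcov : ∀ k, k ∉ U → k ∈ V := fun k hk => by
    simpa [hk] using (Finset.ext_iff.1 hUV k).2 (mem_univ k)
  rw [marg, marg, marg, sum_mul_sum, ← sum_product']
  refine sum_bij' (fun u _ => (fun k => if k ∈ U then t k else u k,
      fun k => if k ∈ V then t k else u k)) (fun x _ k => if k ∈ U then x.2 k else x.1 k)
    ?_ ?_ ?_ ?_ ?_
  · intro u hu
    simp only [mem_filter, mem_univ, true_and, mem_inter, mem_product] at hu ⊢
    constructor <;> intro k hk <;> simp [hk]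
  · intro x hx
    simp only [mem_filter, mem_univ, true_and, mem_inter, mem_product] at hx ⊢
    intro k hk
    simp [hk.1, hx.2 k hk.2]
  · intro u hu
    simp only [mem_filter, mem_univ, true_and, mem_inter] at hu
    funext k
    by_cases hU : k ∈ U
    · by_cases hV : k ∈ V
      · simp [hU, hV, hu k ⟨hU, hV⟩]
      · simp [hU, hV]
    · simp [hU]
  · intro x hx
    simp only [mem_filter, mem_univ, true_and, mem_product] at hx
    ext k
    · by_cases hU : k ∈ U
      · simp [hU, hx.1 k hU]
      · simp [hU]
    · by_cases hV : k ∈ V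
      · simp [hV, hx.2 k hV]
      · simp [hV, (by simpa [hV] using mt (hcov k) hV : k ∈ U)]
  · intro u hu
    simp only [mem_filter, mem_univ, true_and, mem_inter] at hu
    congr 1
    · refine hg fun k hk => ?_
      dsimp only
      split_ifs with hU
      exacts [hu k ⟨hU, mem_coe.1 hk⟩, rfl]
    · refine hh fun k hk => ?_
      dsimp only
      split_ifs with hV
      exacts [hu k ⟨mem_coe.1 hk, hV⟩, rfl]

end Marginal

lemma DependsOn.finset_prod {ι κ : Type*} {α : ι → Type*} {M : Type*} [CommMonoid M]
    {s : Set ι} {J : Finset κ} {f : κ → (Π i, α i) → M} (hf : ∀ j ∈ J, DependsOn (f j) s) :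
    DependsOn (fun x => ∏ j ∈ J, f j x) s :=
  fun _ _ h => prod_congr rfl fun j hj => hf j hj h

section Positions

variable {K : ℕ} (o : Equiv.Perm (Fin K))

def segIci (a : ℕ) : Finset (Fin K) := univ.filter fun k => a ≤ (o.symm k : ℕ)

def segIic (b : ℕ) : Finset (Fin K) := univ.filter fun k => (o.symm k : ℕ) ≤ b

lemma mem_segIv {a b : ℕ} {k : Fin K} :
    k ∈ segIv o a b ↔ a ≤ (o.symm k : ℕ) ∧ (o.symm k : ℕ) ≤ b := by
  simp only [segIv, mem_image, mem_filter, mem_univ, true_and]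
  exact ⟨by rintro ⟨j, hj, rfl⟩; simpa using hj, fun h => ⟨o.symm k, h, o.apply_symm_apply k⟩⟩

lemma segIv_eq_inter (a b : ℕ) : segIv o a b = segIci o a ∩ segIic o b := by
  ext k
  simp [mem_segIv, segIci, segIic]

lemma segIci_union_segIic {a b : ℕ} (hab : a ≤ b + 1) : segIci o a ∪ segIic o b = univ := by
  ext k
  simp only [segIci, segIic, mem_union, mem_filter, mem_univ, true_and, iff_true]
  omega

lemma segIci_zero : segIci o 0 = univ := by
  simp [segIci]

lemma segIic_sub_one : segIic o (K - 1) = univ := by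
  ext k
  simp only [segIic, mem_filter, mem_univ, true_and, iff_true]
  have := (o.symm k).isLt
  omega

lemma marg_prod_segIv {L m a b : ℕ} (hab : a ≤ b + 1) (hmL : m ≤ L)
    {f : ℕ → (Fin K → Bool) → ℝ} (hleft : ∀ j < m, DependsOn (f j) (segIic o b))
    (hright : ∀ j ∈ Ico m L, DependsOn (f j) (segIci o a)) (t : Fin K → Bool) :
    marg (fun u => ∏ j ∈ range L, f j u) (segIv o a b) t =
      marg (fun u => ∏ j ∈ range m, f j u) (segIci o a) t *
        marg (fun u => ∏ j ∈ Ico m L, f j u) (segIic o b) t := by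
  simp only [← prod_range_mul_prod_Ico _ hmL]
  rw [segIv_eq_inter]
  exact marg_mul_inter (segIci_union_segIic o hab)
    (DependsOn.finset_prod fun j hj => hleft j (mem_range.1 hj)) (DependsOn.finset_prod hright) t

end Positions

namespace SegColl

variable {K : ℕ} (𝒞 : SegColl K) (o : Equiv.Perm (Fin K))

lemma s_le_s {i j : ℕ} (hij : i ≤ j) (hj : j < 𝒞.L) : 𝒞.s i ≤ 𝒞.s j :=
  (strictMonoOn_Iic_of_lt_succ (n := 𝒞.L - 1) fun m hm => by
      simpa using 𝒞.s_mono m (by omega)).monotoneOn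
    (show i ≤ 𝒞.L - 1 by omega) (show j ≤ 𝒞.L - 1 by omega) hij

lemma e_le_e {i j : ℕ} (hij : i ≤ j) (hj : j < 𝒞.L) : 𝒞.e i ≤ 𝒞.e j :=
  (strictMonoOn_Iic_of_lt_succ (n := 𝒞.L - 1) fun m hm => by
      simpa using 𝒞.e_mono m (by omega)).monotoneOn
    (show i ≤ 𝒞.L - 1 by omega) (show j ≤ 𝒞.L - 1 by omega) hij

lemma seg_subset_segIic {i j : ℕ} (hij : i ≤ j) (hj : j < 𝒞.L) :
    𝒞.seg o i ⊆ segIic o (𝒞.e j) := fun k hk => by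
  have := 𝒞.e_le_e hij hj
  rw [SegColl.seg, mem_segIv] at hk
  simp only [segIic, mem_filter, mem_univ, true_and]
  omega

lemma seg_subset_segIci {i j : ℕ} (hij : i ≤ j) (hj : j < 𝒞.L) :
    𝒞.seg o j ⊆ segIci o (𝒞.s i) := fun k hk => by
  have := 𝒞.s_le_s hij hj
  rw [SegColl.seg, mem_segIv] at hk
  simp only [segIci, mem_filter, mem_univ, true_and]
  omega

lemma ovl_eq_segIv {i : ℕ} (hi : i + 1 < 𝒞.L) : 𝒞.ovl o i = segIv o (𝒞.s (i + 1)) (𝒞.e i) := by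
  have := 𝒞.s_mono i hi
  have := 𝒞.e_mono i hi
  ext k
  simp only [ovl, seg, mem_inter, mem_segIv]
  omega

/-- With `A_i` the marginal on positions `≥ s_i` of `f_0 ⋯ f_{i-1}` and `B_i` the marginal on
positions `≤ e_i` of `f_{i+1} ⋯ f_{L-1}`, one has `p(C_i) = A_i f_i B_i` and `p(S_i) = A_{i+1} B_i`,
so the defining identity of `M(𝒞)` telescopes, using `A_0 = B_{L-1} = 1`. -/
theorem memModel_of_eq_prod {p : (Fin K → Bool) → ℝ} (hp : IsDist p)
    {f : ℕ → (Fin K → Bool) → ℝ} (hf : ∀ j < 𝒞.L, DependsOn (f j) (𝒞.seg o j))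
    (hpf : ∀ u, p u = ∏ j ∈ range 𝒞.L, f j u) : memModel o 𝒞 p := by
  obtain rfl : p = fun u => ∏ j ∈ range 𝒞.L, f j u := funext hpf
  refine ⟨hp, fun t => ?_⟩
  set A := fun i => marg (fun u => ∏ j ∈ range i, f j u) (segIci o (𝒞.s i)) t
  set B := fun i => marg (fun u => ∏ j ∈ Ico (i + 1) 𝒞.L, f j u) (segIic o (𝒞.e i)) t
  have hseg : ∀ i ∈ range 𝒞.L, marg (fun u => ∏ j ∈ range 𝒞.L, f j u) (𝒞.seg o i) t
      = A i * (f i t * B i) := fun i hi => by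
    have hi := mem_range.1 hi
    rw [seg, marg_prod_segIv o (𝒞.s_le_e i hi |>.trans (Nat.le_succ _)) hi.le
      (fun j hj => (hf j (hj.trans hi)).mono (coe_subset.2 (𝒞.seg_subset_segIic o hj.le hi)))
      (fun j hj => (hf j (mem_Ico.1 hj).2).mono
        (coe_subset.2 (𝒞.seg_subset_segIci o (mem_Ico.1 hj).1 (mem_Ico.1 hj).2)))]
    simp only [prod_eq_prod_Ico_succ_bot hi]
    rw [marg_mul_of_dependsOn ((hf i hi).mono (coe_subset.2 (𝒞.seg_subset_segIic o le_rfl hi)))]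
  have hovl : ∀ i ∈ range (𝒞.L - 1), marg (fun u => ∏ j ∈ range 𝒞.L, f j u) (𝒞.ovl o i) t
      = A (i + 1) * B i := fun i hi => by
    have hi : i + 1 < 𝒞.L := by have := mem_range.1 hi; omega
    rw [𝒞.ovl_eq_segIv o hi, marg_prod_segIv o (𝒞.covers i hi) hi.le
      (fun j hj => (hf j (by omega)).mono
        (coe_subset.2 (𝒞.seg_subset_segIic o (by omega) (by omega))))
      (fun j hj => (hf j (mem_Ico.1 hj).2).mono
        (coe_subset.2 (𝒞.seg_subset_segIci o (mem_Ico.1 hj).1 (mem_Ico.1 hj).2)))]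
  have hA : A 0 = 1 := by simp [A, 𝒞.s_first, segIci_zero, marg_univ]
  have hB : B (𝒞.L - 1) = 1 := by
    simp [B, 𝒞.e_last, segIic_sub_one, marg_univ, Nat.sub_add_cancel 𝒞.hL]
  obtain ⟨n, hn⟩ : ∃ n, 𝒞.L = n + 1 := ⟨𝒞.L - 1, by have := 𝒞.hL; omega⟩
  rw [hn, Nat.add_sub_cancel] at hB
  rw [prod_congr rfl hseg, prod_congr rfl hovl, prod_mul_distrib, prod_mul_distrib,
    prod_mul_distrib, hn, Nat.add_sub_cancel, prod_range_succ', prod_range_succ B, hA, hB]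
  ring

end SegColl

lemma log_eq_of_memModel {K : ℕ} {o : Equiv.Perm (Fin K)} {𝒞 : SegColl K}
    {p : (Fin K → Bool) → ℝ} (hpos : ∀ t, 0 < p t) (hp : memModel o 𝒞 p) (t : Fin K → Bool) :
    Real.log (p t) = ∑ i ∈ range 𝒞.L, Real.log (marg p (𝒞.seg o i) t)
      - ∑ i ∈ range (𝒞.L - 1), Real.log (marg p (𝒞.ovl o i) t) := by
  have h := congrArg Real.log (hp.2 t)
  rw [Real.log_mul (hpos t).ne' (prod_pos fun i _ => marg_pos hpos _ t).ne',
    Real.log_prod fun i _ => (marg_pos hpos _ t).ne',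
    Real.log_prod fun i _ => (marg_pos hpos _ t).ne'] at h
  linarith

/-- A strictly positive distribution `p` belongs to `M(𝒞)` iff it has an
exponential form `p(A = t) = exp(∑_{X ∈ 𝒳} r_X S_X(t))` where `𝒳` is the downward
closure of `𝒞` (i.e. the coefficients `r` vanish outside the downward closure). -/
theorem memModel_iff_exponential_form {K : ℕ} (o : Equiv.Perm (Fin K)) (𝒞 : SegColl K)
    (p : (Fin K → Bool) → ℝ) (hdist : IsDist p) (hpos : ∀ t, 0 < p t) :
    memModel o 𝒞 p ↔
      ∃ r : Finset (Fin K) → ℝ,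
        (∀ X : Finset (Fin K), ¬ (∃ i < 𝒞.L, X ⊆ 𝒞.seg o i) → r X = 0) ∧
        ∀ t : Fin K → Bool,
          p t = Real.exp (∑ X : Finset (Fin K), r X * indFn X t) := by
  have hspan : ∀ i ∈ range 𝒞.L, ∀ C ⊆ 𝒞.seg o i,
      indSpan {X | X ⊆ C} ≤ indSpan {X | ∃ i < 𝒞.L, X ⊆ 𝒞.seg o i} :=
    fun i hi C hC => indSpan_mono fun X (hX : X ⊆ C) => ⟨i, mem_range.1 hi, hX.trans hC⟩
  have hlogMarg : ∀ C, (fun t => Real.log (marg p C t)) ∈ indSpan {X | X ⊆ C} := fun C =>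
    mem_indSpan_iff_dependsOn.2 fun u v h => congrArg Real.log (dependsOn_marg p C h)
  constructor
  · intro hp
    have hlog : (fun t => Real.log (p t))
        = ∑ i ∈ range 𝒞.L, (fun t => Real.log (marg p (𝒞.seg o i) t))
          - ∑ i ∈ range (𝒞.L - 1), (fun t => Real.log (marg p (𝒞.ovl o i) t)) := by
      funext t
      simp only [Pi.sub_apply, Finset.sum_apply, log_eq_of_memModel hpos hp t]
    have hmem : (fun t => Real.log (p t)) ∈ indSpan {X | ∃ i < 𝒞.L, X ⊆ 𝒞.seg o i} := by
      rw [hlog]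
      refine sub_mem (sum_mem fun i hi => hspan i hi _ subset_rfl (hlogMarg _))
        (sum_mem fun i hi => hspan i ?_ _ inter_subset_left (hlogMarg _))
      exact mem_range.2 (by have := mem_range.1 hi; omega)
    obtain ⟨r, hr0, hr⟩ := mem_indSpan_iff.1 hmem
    exact ⟨r, hr0, fun t => by rw [← hr, Real.exp_log (hpos t)]⟩
  · rintro ⟨r, hr0, hr⟩
    obtain ⟨g, hg, hsum⟩ :=
      exists_sum_dependsOn_of_mem_indSpan (mem_indSpan_iff.2 ⟨r, hr0, fun _ => rfl⟩)
    refine 𝒞.memModel_of_eq_prod o hdist (f := fun i u => Real.exp (g i u))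
      (fun j hj u v h => congrArg Real.exp (hg j hj h)) fun u => ?_
    rw [hr, ← Real.exp_sum, ← Finset.sum_apply, ← hsum]
end
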